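/- Under the hypotheses of the SOTS residual identity — namely: k_{ij} : ℝ^n → ℝ are C¹ and ℤ^n-periodic; k̂_{ij} ∈ ℝ are constants; T⁽⁰⁾ : Ω → ℝ is C⁴ on an open set Ω ⊆ ℝ^n and solves −k̂_{ij}∂_i∂_j T⁽⁰⁾ = h on Ω; M_α : ℝ^n → ℝ are C² and ℤ^n-periodic solving ∂_{y_i}(k_{ij}∂_{y_j}M_α) = −∂_{y_i}k_{iα}; M_{α₁α₂} : ℝ^n → ℝ are C² and ℤ^n-periodic solving ∂_{y_i}(k_{ij}∂_{y_j}M_{α₁α₂}) = k̂_{α₁α₂} − k_{α₁α₂} − ∂_{y_i}(k_{iα₂}M_{α₁}) − k_{α₁j}∂_{y_j}M_{α₂} — define for each ε > 0 the SOTS approximation T^{(2ε)}(x) = T⁽⁰⁾(x) + ε M_α(x/ε)∂_α T⁽⁰⁾(x) + ε² M_{α₁α₂}(x/ε)∂²_{α₁α₂}T⁽⁰⁾(x). Then for every compact set K ⊂ Ω there exists a constant C > 0, independent of ε, such that for all ε ∈ (0,1] and all x ∈ K: | −∂_i( k_{ij}(x/ε) ∂_j T^{(2ε)} )(x) − h(x)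 | ≤ C ε. -/

import Mathlib

/-!
Write `y = x/ε`. Multiplying the gradient of `T^{(2ε)}` by `k(y)` and using the symmetry of the
Hessian of `T⁰`, the flux takes the two-scale form
`σ_i = N_{iα}(y) ∂_αT⁰ + ε L_{iαβ}(y) ∂_α∂_βT⁰ + ε² Q_{ijαβ}(y) ∂_j∂_α∂_βT⁰`,
where `N` and `L` are the fluxes of the two cell problems. Differentiating `g(x/ε) f(x)` puts a
factor `ε⁻¹` on `g`, so `div σ` has an `ε⁻¹` term, which vanishes because `div_y N = 0`, and an
`ε⁰` term, in which `div_y L = k̂ - N` leaves exactly `k̂_{αβ} ∂_α∂_βT⁰ = -h`. The rest is `ε` times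
a finite sum of products of continuous periodic functions of `y`, bounded on a period cell, with
third and fourth derivatives of `T⁰`, bounded on `K`.
-/

open scoped BigOperators

/-- Partial derivative of `f : ℝ^n → ℝ` in the `i`-th coordinate direction. -/
noncomputable def pd {n : ℕ} (i : Fin n) (f : (Fin n → ℝ) → ℝ) (y : Fin n → ℝ) : ℝ :=
  fderiv ℝ f y (Pi.single i 1)

open Topology Finset

variable {n : ℕ}

section PartialDerivative

variable {i : Fin n} {f g : (Fin n → ℝ) → ℝ} {x : Fin n → ℝ}

theorem Filter.EventuallyEq.pd_eq (h : f =ᶠ[𝓝 x] g) : pd i f x = pd i g x := by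
  rw [pd, pd, h.fderiv_eq]

theorem pd_add (hf : DifferentiableAt ℝ f x) (hg : DifferentiableAt ℝ g x) :
    pd i (fun y => f y + g y) x = pd i f x + pd i g x := by
  simp [pd, fderiv_fun_add hf hg]

theorem pd_const_mul (c : ℝ) (hf : DifferentiableAt ℝ f x) :
    pd i (fun y => c * f y) x = c * pd i f x := by
  simp [pd, fderiv_const_mul hf]

theorem pd_mul (hf : DifferentiableAt ℝ f x) (hg : DifferentiableAt ℝ g x) :
    pd i (fun y => f y * g y) x = pd i f x * g x + f x * pd i g x := by
  simp [pd, fderiv_fun_mul hf hg, mul_comm, add_comm]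

theorem pd_sum {ι : Type*} (s : Finset ι) {f : ι → (Fin n → ℝ) → ℝ}
    (hf : ∀ p ∈ s, DifferentiableAt ℝ (f p) x) :
    pd i (fun y => ∑ p ∈ s, f p y) x = ∑ p ∈ s, pd i (f p) x := by
  simp [pd, fderiv_fun_sum hf]

theorem pd_comp_smul (c : ℝ) : pd i (fun y => g (c • y)) x = c * pd i g (c • x) := by
  simp [pd, fderiv_comp_smul]

theorem ContDiff.pd {m : ℕ} (hf : ContDiff ℝ (m + 1) f) (i : Fin n) : ContDiff ℝ m (pd i f) :=
  (hf.fderiv_right le_rfl).clm_apply contDiff_const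

theorem ContDiffAt.pd {m : ℕ} (hf : ContDiffAt ℝ (m + 1) f x) (i : Fin n) :
    ContDiffAt ℝ m (pd i f) x :=
  (hf.fderiv_right le_rfl).clm_apply contDiffAt_const

theorem pd_pd_comm (hf : ContDiffAt ℝ 2 f x) (a b : Fin n) :
    pd a (pd b f) x = pd b (pd a f) x := by
  have hd : DifferentiableAt ℝ (fderiv ℝ f) x :=
    (hf.fderiv_right (m := 1) le_rfl).differentiableAt one_ne_zero
  have hsymm := hf.isSymmSndFDerivAt (by simp) (Pi.single a 1) (Pi.single b 1)
  unfold pd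
  rw [fderiv_clm_apply hd (differentiableAt_const _),
    fderiv_clm_apply hd (differentiableAt_const _)]
  simpa using hsymm

end PartialDerivative

def IsIntPeriodic (f : (Fin n → ℝ) → ℝ) : Prop :=
  ∀ (y : Fin n → ℝ) (z : Fin n → ℤ), f (y + fun t => (z t : ℝ)) = f y

section Periodic

variable {f g : (Fin n → ℝ) → ℝ}

theorem IsIntPeriodic.add (hf : IsIntPeriodic f) (hg : IsIntPeriodic g) :
    IsIntPeriodic fun y => f y + g y := fun y z => by
  simp only [hf y z, hg y z]

theorem IsIntPeriodic.mul (hf : IsIntPeriodic f) (hg : IsIntPeriodic g) :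
    IsIntPeriodic fun y => f y * g y := fun y z => by
  simp only [hf y z, hg y z]

theorem IsIntPeriodic.sum {ι : Type*} (s : Finset ι) {f : ι → (Fin n → ℝ) → ℝ}
    (hf : ∀ p ∈ s, IsIntPeriodic (f p)) : IsIntPeriodic fun y => ∑ p ∈ s, f p y :=
  fun y z => sum_congr rfl fun p hp => hf p hp y z

theorem IsIntPeriodic.exists_abs_le (hf : IsIntPeriodic f) (hc : Continuous f) :
    ∃ C, ∀ y, |f y| ≤ C := by
  obtain ⟨C, hC⟩ := (isCompact_Icc (a := (0 : Fin n → ℝ)) (b := 1)).exists_bound_of_continuousOn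
    hc.continuousOn
  refine ⟨C, fun y => ?_⟩
  have hy : (fun t => Int.fract (y t)) + (fun t => ((⌊y t⌋ : ℤ) : ℝ)) = y :=
    funext fun t => Int.fract_add_floor (y t)
  rw [← hy, hf]
  exact hC _ ⟨fun t => Int.fract_nonneg _, fun t => (Int.fract_lt_one _).le⟩

theorem IsIntPeriodic.pd (hf : IsIntPeriodic f) (i : Fin n) : IsIntPeriodic (pd i f) := by
  intro y z
  have hshift : (fun y' => f (y' + fun t => (z t : ℝ))) = f := funext fun y' => hf y' z
  change fderiv ℝ f _ _ = fderiv ℝ f _ _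
  rw [← fderiv_comp_add_right, hshift]

end Periodic

theorem exists_abs_sum_mul_le {ι X : Type*} [Fintype ι] [TopologicalSpace X] {K : Set X}
    (hK : IsCompact K) {g : ι → (Fin n → ℝ) → ℝ} {u : ι → X → ℝ}
    (hg : ∀ p, Continuous (g p)) (hgper : ∀ p, IsIntPeriodic (g p))
    (hu : ∀ p, ContinuousOn (u p) K) :
    ∃ C, ∀ y, ∀ x ∈ K, |∑ p, g p y * u p x| ≤ C := by
  choose Cg hCg using fun p => (hgper p).exists_abs_le (hg p)
  choose Cu hCu using fun p => hK.exists_bound_of_continuousOn (hu p)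
  refine ⟨∑ p, Cg p * Cu p, fun y x hx => (abs_sum_le_sum_abs _ _).trans ?_⟩
  refine sum_le_sum fun p _ => ?_
  rw [abs_mul]
  exact mul_le_mul (hCg p y) (hCu p x hx) (abs_nonneg _) ((abs_nonneg _).trans (hCg p y))

section TwoScale

variable {ε : ℝ} {i : Fin n} {x : Fin n → ℝ}

theorem DifferentiableAt.comp_inv_smul {g : (Fin n → ℝ) → ℝ}
    (hg : DifferentiableAt ℝ g (ε⁻¹ • x)) : DifferentiableAt ℝ (fun y => g (ε⁻¹ • y)) x :=
  hg.comp x (differentiableAt_id.const_smul ε⁻¹)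

theorem differentiableAt_sum_twoScale_mul {ι : Type*} [Fintype ι]
    {g f : ι → (Fin n → ℝ) → ℝ} (hg : ∀ p, DifferentiableAt ℝ (g p) (ε⁻¹ • x))
    (hf : ∀ p, DifferentiableAt ℝ (f p) x) :
    DifferentiableAt ℝ (fun y => ∑ p, g p (ε⁻¹ • y) * f p y) x :=
  DifferentiableAt.fun_sum fun p _ => (hg p).comp_inv_smul.fun_mul (hf p)

theorem pd_twoScale_mul {g f : (Fin n → ℝ) → ℝ} (hg : DifferentiableAt ℝ g (ε⁻¹ • x))
    (hf : DifferentiableAt ℝ f x) :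
    pd i (fun y => g (ε⁻¹ • y) * f y) x
      = g (ε⁻¹ • x) * pd i f x + ε⁻¹ * (pd i g (ε⁻¹ • x) * f x) := by
  rw [pd_mul hg.comp_inv_smul hf, pd_comp_smul]
  ring

theorem pd_sum_twoScale_mul {ι : Type*} [Fintype ι] {g f : ι → (Fin n → ℝ) → ℝ}
    (hg : ∀ p, DifferentiableAt ℝ (g p) (ε⁻¹ • x)) (hf : ∀ p, DifferentiableAt ℝ (f p) x) :
    pd i (fun y => ∑ p, g p (ε⁻¹ • y) * f p y) x
      = ∑ p, g p (ε⁻¹ • x) * pd i (f p) x + ε⁻¹ * ∑ p, pd i (g p) (ε⁻¹ • x) * f p x := by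
  rw [pd_sum _ fun p _ => (hg p).comp_inv_smul.fun_mul (hf p), mul_sum, ← sum_add_distrib]
  exact sum_congr rfl fun p _ => pd_twoScale_mul (hg p) (hf p)

end TwoScale

section SOTS

variable (k : Fin n → Fin n → (Fin n → ℝ) → ℝ) (M : Fin n → (Fin n → ℝ) → ℝ)
  (M2 : Fin n → Fin n → (Fin n → ℝ) → ℝ)

noncomputable def sotsApprox (T0 : (Fin n → ℝ) → ℝ) (ε : ℝ) (x : Fin n → ℝ) : ℝ :=
  T0 x + ε * ∑ α, M α (ε⁻¹ • x) * pd α T0 x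
    + ε ^ 2 * ∑ α₁, ∑ α₂, M2 α₁ α₂ (ε⁻¹ • x) * pd α₁ (pd α₂ T0) x

-- The coefficients of `∂_αT⁰`, `ε ∂_{α₁}∂_{α₂}T⁰` and `ε² ∂_j∂_{α₁}∂_{α₂}T⁰` in the flux
-- `k(x/ε) ∇T^{(2ε)}`, indexed by `p = (α₁, α₂)` and `q = (j, α₁, α₂)`.
noncomputable def cellFlux₁ (i α : Fin n) (y : Fin n → ℝ) : ℝ :=
  k i α y + ∑ j, k i j y * pd j (M α) y

noncomputable def cellFlux₂ (i : Fin n) (p : Fin n × Fin n) (y : Fin n → ℝ) : ℝ :=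
  k i p.2 y * M p.1 y + ∑ j, k i j y * pd j (M2 p.1 p.2) y

noncomputable def cellFlux₃ (i : Fin n) (q : Fin n × (Fin n × Fin n)) (y : Fin n → ℝ) : ℝ :=
  k i q.1 y * M2 q.2.1 q.2.2 y

end SOTS

section TwoScaleFlux

variable (N : Fin n → Fin n → (Fin n → ℝ) → ℝ) (L : Fin n → Fin n × Fin n → (Fin n → ℝ) → ℝ)
  (Q : Fin n → Fin n × (Fin n × Fin n) → (Fin n → ℝ) → ℝ) (u : (Fin n → ℝ) → ℝ) (ε : ℝ)

noncomputable def twoScaleFlux (i : Fin n) (x : Fin n → ℝ) : ℝ :=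
  ∑ α, N i α (ε⁻¹ • x) * pd α u x + ε * ∑ p, L i p (ε⁻¹ • x) * pd p.1 (pd p.2 u) x
    + ε ^ 2 * ∑ q, Q i q (ε⁻¹ • x) * pd q.1 (pd q.2.1 (pd q.2.2 u)) x

noncomputable def twoScaleRemainder (x : Fin n → ℝ) : ℝ :=
  ∑ i, ∑ p, L i p (ε⁻¹ • x) * pd i (pd p.1 (pd p.2 u)) x
    + ∑ i, ∑ q, pd i (Q i q) (ε⁻¹ • x) * pd q.1 (pd q.2.1 (pd q.2.2 u)) x
    + ε * ∑ i, ∑ q, Q i q (ε⁻¹ • x) * pd i (pd q.1 (pd q.2.1 (pd q.2.2 u))) x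

end TwoScaleFlux

theorem sum_pd_twoScaleFlux {N : Fin n → Fin n → (Fin n → ℝ) → ℝ}
    {L : Fin n → Fin n × Fin n → (Fin n → ℝ) → ℝ}
    {Q : Fin n → Fin n × (Fin n × Fin n) → (Fin n → ℝ) → ℝ} {u : (Fin n → ℝ) → ℝ}
    {ε : ℝ} {x : Fin n → ℝ} (khat : Fin n → Fin n → ℝ) (hε : ε ≠ 0) (hu : ContDiffAt ℝ 4 u x)
    (hN : ∀ i α, DifferentiableAt ℝ (N i α) (ε⁻¹ • x))
    (hL : ∀ i p, DifferentiableAt ℝ (L i p) (ε⁻¹ • x))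
    (hQ : ∀ i q, DifferentiableAt ℝ (Q i q) (ε⁻¹ • x))
    (hdivN : ∀ α, ∑ i, pd i (N i α) (ε⁻¹ • x) = 0)
    (hdivL : ∀ p, ∑ i, pd i (L i p) (ε⁻¹ • x) = khat p.1 p.2 - N p.1 p.2 (ε⁻¹ • x)) :
    ∑ i, pd i (twoScaleFlux N L Q u ε i) x
      = ∑ a, ∑ b, khat a b * pd a (pd b u) x + ε * twoScaleRemainder L Q u ε x := by
  have hu₁ a : DifferentiableAt ℝ (pd a u) x := (hu.pd a).differentiableAt (by norm_num)
  have hu₂ (p : Fin n × Fin n) : DifferentiableAt ℝ (pd p.1 (pd p.2 u)) x :=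
    ((hu.pd p.2).pd p.1).differentiableAt (by norm_num)
  have hu₃ (q : Fin n × (Fin n × Fin n)) : DifferentiableAt ℝ (pd q.1 (pd q.2.1 (pd q.2.2 u))) x :=
    (((hu.pd q.2.2).pd q.2.1).pd q.1).differentiableAt one_ne_zero
  have hpd : ∀ i, pd i (twoScaleFlux N L Q u ε i) x
      = ∑ α, N i α (ε⁻¹ • x) * pd i (pd α u) x + ε⁻¹ * ∑ α, pd i (N i α) (ε⁻¹ • x) * pd α u x
        + ∑ p, pd i (L i p) (ε⁻¹ • x) * pd p.1 (pd p.2 u) x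
        + ε * (∑ p, L i p (ε⁻¹ • x) * pd i (pd p.1 (pd p.2 u)) x
          + ∑ q, pd i (Q i q) (ε⁻¹ • x) * pd q.1 (pd q.2.1 (pd q.2.2 u)) x)
        + ε ^ 2 * ∑ q, Q i q (ε⁻¹ • x) * pd i (pd q.1 (pd q.2.1 (pd q.2.2 u))) x := by
    intro i
    have dN := differentiableAt_sum_twoScale_mul (hN i) hu₁
    have dL := differentiableAt_sum_twoScale_mul (hL i) hu₂
    have dQ := differentiableAt_sum_twoScale_mul (hQ i) hu₃
    unfold twoScaleFlux
    rw [pd_add (dN.fun_add (dL.const_mul ε)) (dQ.const_mul _), pd_add dN (dL.const_mul ε),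
      pd_const_mul _ dL, pd_const_mul _ dQ, pd_sum_twoScale_mul (hN i) hu₁,
      pd_sum_twoScale_mul (hL i) hu₂, pd_sum_twoScale_mul (hQ i) hu₃]
    field_simp
    ring
  have hN₀ : ∑ i, ∑ α, pd i (N i α) (ε⁻¹ • x) * pd α u x = 0 := by
    rw [sum_comm]
    simp only [← sum_mul, hdivN, zero_mul, sum_const_zero]
  have hL₀ : ∑ i, ∑ p, pd i (L i p) (ε⁻¹ • x) * pd p.1 (pd p.2 u) x
      = ∑ p : Fin n × Fin n, (khat p.1 p.2 - N p.1 p.2 (ε⁻¹ • x)) * pd p.1 (pd p.2 u) x := by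
    rw [sum_comm]
    simp only [← sum_mul, hdivL]
  have hNN : ∑ i, ∑ α, N i α (ε⁻¹ • x) * pd i (pd α u) x
      = ∑ p : Fin n × Fin n, N p.1 p.2 (ε⁻¹ • x) * pd p.1 (pd p.2 u) x :=
    (Fintype.sum_prod_type' (fun i α => N i α (ε⁻¹ • x) * pd i (pd α u) x)).symm
  have hkhat : ∑ a, ∑ b, khat a b * pd a (pd b u) x
      = ∑ p : Fin n × Fin n, khat p.1 p.2 * pd p.1 (pd p.2 u) x :=
    (Fintype.sum_prod_type' (fun a b => khat a b * pd a (pd b u) x)).symm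
  simp only [hpd, sum_add_distrib, ← mul_sum, hN₀, hL₀, hNN, hkhat, twoScaleRemainder, sub_mul,
    sum_sub_distrib]
  ring

theorem exists_abs_twoScaleRemainder_le {L : Fin n → Fin n × Fin n → (Fin n → ℝ) → ℝ}
    {Q : Fin n → Fin n × (Fin n × Fin n) → (Fin n → ℝ) → ℝ} {u : (Fin n → ℝ) → ℝ}
    {K : Set (Fin n → ℝ)} (hK : IsCompact K) (hu : ∀ x ∈ K, ContDiffAt ℝ 4 u x)
    (hL : ∀ i p, Continuous (L i p)) (hLper : ∀ i p, IsIntPeriodic (L i p))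
    (hQ : ∀ i q, ContDiff ℝ 1 (Q i q)) (hQper : ∀ i q, IsIntPeriodic (Q i q)) :
    ∃ C, ∀ ε, |ε| ≤ 1 → ∀ x ∈ K, |twoScaleRemainder L Q u ε x| ≤ C := by
  have hu₃ (q : Fin n × (Fin n × Fin n)) : ContinuousOn (pd q.1 (pd q.2.1 (pd q.2.2 u))) K :=
    continuousOn_of_forall_continuousAt fun x hx => ((((hu x hx).pd _).pd _).pd _).continuousAt
  have hu₄ (r : Fin n × (Fin n × (Fin n × Fin n))) :
      ContinuousOn (pd r.1 (pd r.2.1 (pd r.2.2.1 (pd r.2.2.2 u)))) K :=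
    continuousOn_of_forall_continuousAt fun x hx =>
      (((((hu x hx).pd _).pd _).pd _).pd _).continuousAt
  obtain ⟨C₁, hC₁⟩ := exists_abs_sum_mul_le hK
    (g := fun r : Fin n × (Fin n × Fin n) => L r.1 r.2)
    (fun r => hL _ _) (fun r => hLper _ _) hu₃
  obtain ⟨C₂, hC₂⟩ := exists_abs_sum_mul_le hK
    (g := fun r : Fin n × (Fin n × (Fin n × Fin n)) => pd r.1 (Q r.1 r.2))
    (fun r => ((hQ _ _).pd _).continuous) (fun r => (hQper _ _).pd _) (fun r => hu₃ r.2)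
  obtain ⟨C₃, hC₃⟩ := exists_abs_sum_mul_le hK
    (g := fun r : Fin n × (Fin n × (Fin n × Fin n)) => Q r.1 r.2)
    (fun r => (hQ _ _).continuous) (fun r => hQper _ _) hu₄
  refine ⟨C₁ + C₂ + C₃, fun ε hε x hx => ?_⟩
  have h₁ := hC₁ (ε⁻¹ • x) x hx
  have h₂ := hC₂ (ε⁻¹ • x) x hx
  have h₃ := hC₃ (ε⁻¹ • x) x hx
  simp only [Fintype.sum_prod_type] at h₁ h₂ h₃
  unfold twoScaleRemainder
  simp only [Fintype.sum_prod_type]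
  refine (abs_add_three _ _ _).trans (add_le_add (add_le_add h₁ h₂) ?_)
  rw [abs_mul]
  exact (mul_le_of_le_one_left (abs_nonneg _) hε).trans h₃

section CellProblems

variable {k : Fin n → Fin n → (Fin n → ℝ) → ℝ} {M : Fin n → (Fin n → ℝ) → ℝ}
  {M2 : Fin n → Fin n → (Fin n → ℝ) → ℝ}

theorem differentiable_cellFlux₁ (hk : ∀ i j, Differentiable ℝ (k i j))
    (hdM : ∀ j α, Differentiable ℝ (pd j (M α))) (i α : Fin n) :
    Differentiable ℝ (cellFlux₁ k M i α) :=
  (hk i α).add (Differentiable.fun_sum fun j _ => (hk i j).mul (hdM j α))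

theorem differentiable_cellFlux₂ (hk : ∀ i j, Differentiable ℝ (k i j))
    (hM : ∀ α, Differentiable ℝ (M α)) (hdM2 : ∀ j a b, Differentiable ℝ (pd j (M2 a b)))
    (i : Fin n) (p : Fin n × Fin n) : Differentiable ℝ (cellFlux₂ k M M2 i p) :=
  ((hk i p.2).mul (hM p.1)).add (Differentiable.fun_sum fun j _ => (hk i j).mul (hdM2 j _ _))

theorem contDiff_cellFlux₃ {m : WithTop ℕ∞} (hk : ∀ i j, ContDiff ℝ m (k i j))
    (hM2 : ∀ a b, ContDiff ℝ m (M2 a b)) (i : Fin n) (q : Fin n × (Fin n × Fin n)) :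
    ContDiff ℝ m (cellFlux₃ k M2 i q) :=
  (hk i q.1).mul (hM2 _ _)

theorem isIntPeriodic_cellFlux₂ (hkper : ∀ i j, IsIntPeriodic (k i j))
    (hMper : ∀ α, IsIntPeriodic (M α)) (hM2per : ∀ a b, IsIntPeriodic (M2 a b))
    (i : Fin n) (p : Fin n × Fin n) : IsIntPeriodic (cellFlux₂ k M M2 i p) :=
  ((hkper i p.2).mul (hMper p.1)).add
    (IsIntPeriodic.sum _ fun j _ => (hkper i j).mul ((hM2per _ _).pd j))

theorem isIntPeriodic_cellFlux₃ (hkper : ∀ i j, IsIntPeriodic (k i j))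
    (hM2per : ∀ a b, IsIntPeriodic (M2 a b)) (i : Fin n) (q : Fin n × (Fin n × Fin n)) :
    IsIntPeriodic (cellFlux₃ k M2 i q) :=
  (hkper i q.1).mul (hM2per _ _)

theorem sum_pd_cellFlux₁ (hk : ∀ i j, Differentiable ℝ (k i j))
    (hdM : ∀ j α, Differentiable ℝ (pd j (M α))) {α : Fin n} {y : Fin n → ℝ}
    (hcell : ∑ i, pd i (fun y' => ∑ j, k i j y' * pd j (M α) y') y = -∑ i, pd i (k i α) y) :
    ∑ i, pd i (cellFlux₁ k M i α) y = 0 := by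
  unfold cellFlux₁
  rw [sum_congr rfl fun i _ => pd_add (hk i α y)
    (Differentiable.fun_sum (fun j _ => (hk i j).fun_mul (hdM j α)) y), sum_add_distrib, hcell]
  ring

theorem sum_pd_cellFlux₂ (hk : ∀ i j, Differentiable ℝ (k i j))
    (hM : ∀ α, Differentiable ℝ (M α)) (hdM2 : ∀ j a b, Differentiable ℝ (pd j (M2 a b)))
    {khat : Fin n → Fin n → ℝ} {p : Fin n × Fin n} {y : Fin n → ℝ}
    (hcell2 : ∑ i, pd i (fun y' => ∑ j, k i j y' * pd j (M2 p.1 p.2) y') y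
        = khat p.1 p.2 - k p.1 p.2 y
          - ∑ i, pd i (fun y' => k i p.2 y' * M p.1 y') y
          - ∑ j, k p.1 j y * pd j (M p.2) y) :
    ∑ i, pd i (cellFlux₂ k M M2 i p) y = khat p.1 p.2 - cellFlux₁ k M p.1 p.2 y := by
  unfold cellFlux₁ cellFlux₂
  rw [sum_congr rfl fun i _ => pd_add ((hk i p.2).fun_mul (hM p.1) y)
    (Differentiable.fun_sum (fun j _ => (hk i j).fun_mul (hdM2 j _ _)) y), sum_add_distrib, hcell2]
  ring

end CellProblems

section Approximation

variable {k : Fin n → Fin n → (Fin n → ℝ) → ℝ} {M : Fin n → (Fin n → ℝ) → ℝ}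
  {M2 : Fin n → Fin n → (Fin n → ℝ) → ℝ} {T0 : (Fin n → ℝ) → ℝ} {ε : ℝ} {x : Fin n → ℝ}

theorem pd_sotsApprox (hε : ε ≠ 0) (hM : ∀ α, DifferentiableAt ℝ (M α) (ε⁻¹ • x))
    (hM2 : ∀ a b, DifferentiableAt ℝ (M2 a b) (ε⁻¹ • x)) (hT0 : ContDiffAt ℝ 3 T0 x)
    (j : Fin n) :
    pd j (sotsApprox M M2 T0 ε) x
      = pd j T0 x + ∑ α, pd j (M α) (ε⁻¹ • x) * pd α T0 x
        + ε * (∑ α, M α (ε⁻¹ • x) * pd j (pd α T0) x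
          + ∑ p : Fin n × Fin n, pd j (M2 p.1 p.2) (ε⁻¹ • x) * pd p.1 (pd p.2 T0) x)
        + ε ^ 2 * ∑ p : Fin n × Fin n, M2 p.1 p.2 (ε⁻¹ • x) * pd j (pd p.1 (pd p.2 T0)) x := by
  have hT₀ : DifferentiableAt ℝ T0 x := hT0.differentiableAt (by norm_num)
  have hT₁ a : DifferentiableAt ℝ (pd a T0) x := (hT0.pd a).differentiableAt (by norm_num)
  have hT₂ (p : Fin n × Fin n) : DifferentiableAt ℝ (pd p.1 (pd p.2 T0)) x :=
    ((hT0.pd p.2).pd p.1).differentiableAt one_ne_zero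
  have hM2' (p : Fin n × Fin n) : DifferentiableAt ℝ (M2 p.1 p.2) (ε⁻¹ • x) := hM2 _ _
  have happrox : sotsApprox M M2 T0 ε = fun x => T0 x + ε * ∑ α, M α (ε⁻¹ • x) * pd α T0 x
      + ε ^ 2 * ∑ p : Fin n × Fin n, M2 p.1 p.2 (ε⁻¹ • x) * pd p.1 (pd p.2 T0) x := by
    funext x
    simp only [sotsApprox, Fintype.sum_prod_type]
  have d₁ := differentiableAt_sum_twoScale_mul hM hT₁
  have d₂ := differentiableAt_sum_twoScale_mul hM2' hT₂
  rw [happrox, pd_add (hT₀.fun_add (d₁.const_mul ε)) (d₂.const_mul _),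
    pd_add hT₀ (d₁.const_mul ε), pd_const_mul _ d₁, pd_const_mul _ d₂,
    pd_sum_twoScale_mul hM hT₁, pd_sum_twoScale_mul hM2' hT₂]
  field_simp
  ring

theorem sum_mul_pd_sotsApprox (hε : ε ≠ 0) (hM : ∀ α, DifferentiableAt ℝ (M α) (ε⁻¹ • x))
    (hM2 : ∀ a b, DifferentiableAt ℝ (M2 a b) (ε⁻¹ • x)) (hT0 : ContDiffAt ℝ 3 T0 x)
    (i : Fin n) :
    ∑ j, k i j (ε⁻¹ • x) * pd j (sotsApprox M M2 T0 ε) x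
      = twoScaleFlux (cellFlux₁ k M) (cellFlux₂ k M M2) (cellFlux₃ k M2) T0 ε i x := by
  have hsymm : ∀ a b, pd a (pd b T0) x = pd b (pd a T0) x :=
    pd_pd_comm (hT0.of_le (by norm_num))
  have hb : ∑ j, k i j (ε⁻¹ • x) * ∑ α, pd j (M α) (ε⁻¹ • x) * pd α T0 x
      = ∑ α, (∑ j, k i j (ε⁻¹ • x) * pd j (M α) (ε⁻¹ • x)) * pd α T0 x := by
    simp only [mul_sum, sum_mul, mul_assoc]
    exact sum_comm
  have hc : ∑ j, k i j (ε⁻¹ • x) * ∑ α, M α (ε⁻¹ • x) * pd j (pd α T0) x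
      = ∑ p : Fin n × Fin n, k i p.2 (ε⁻¹ • x) * M p.1 (ε⁻¹ • x) * pd p.1 (pd p.2 T0) x := by
    rw [Fintype.sum_prod_type, sum_comm]
    refine sum_congr rfl fun j _ => ?_
    rw [mul_sum]
    refine sum_congr rfl fun α _ => ?_
    rw [hsymm]
    ring
  have hd : ∑ j, k i j (ε⁻¹ • x) * ∑ p : Fin n × Fin n,
        pd j (M2 p.1 p.2) (ε⁻¹ • x) * pd p.1 (pd p.2 T0) x
      = ∑ p : Fin n × Fin n,
        (∑ j, k i j (ε⁻¹ • x) * pd j (M2 p.1 p.2) (ε⁻¹ • x)) * pd p.1 (pd p.2 T0) x := by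
    simp only [mul_sum, sum_mul, mul_assoc]
    exact sum_comm
  have he : ∑ j, k i j (ε⁻¹ • x) * ∑ p : Fin n × Fin n,
        M2 p.1 p.2 (ε⁻¹ • x) * pd j (pd p.1 (pd p.2 T0)) x
      = ∑ q : Fin n × (Fin n × Fin n),
        k i q.1 (ε⁻¹ • x) * M2 q.2.1 q.2.2 (ε⁻¹ • x) * pd q.1 (pd q.2.1 (pd q.2.2 T0)) x := by
    rw [Fintype.sum_prod_type]
    simp only [mul_sum, mul_assoc]
  simp only [pd_sotsApprox hε hM hM2 hT0, mul_add, sum_add_distrib, mul_left_comm _ ε,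
    mul_left_comm _ (ε ^ 2), ← mul_sum, hb, hc, hd, he]
  simp only [twoScaleFlux, cellFlux₁, cellFlux₂, cellFlux₃, add_mul, sum_add_distrib]
  ring

end Approximation

theorem sots_residual_identity {Ω : Set (Fin n → ℝ)} (hΩ : IsOpen Ω)
    {k : Fin n → Fin n → (Fin n → ℝ) → ℝ} {M : Fin n → (Fin n → ℝ) → ℝ}
    {M2 : Fin n → Fin n → (Fin n → ℝ) → ℝ} {T0 : (Fin n → ℝ) → ℝ} {khat : Fin n → Fin n → ℝ}
    (hk : ∀ i j, Differentiable ℝ (k i j)) (hM : ∀ α, Differentiable ℝ (M α))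
    (hdM : ∀ j α, Differentiable ℝ (pd j (M α))) (hM2 : ∀ a b, Differentiable ℝ (M2 a b))
    (hdM2 : ∀ j a b, Differentiable ℝ (pd j (M2 a b))) (hT0 : ContDiffOn ℝ 4 T0 Ω)
    (hcell : ∀ (α : Fin n) (y : Fin n → ℝ),
      ∑ i, pd i (fun y' => ∑ j, k i j y' * pd j (M α) y') y = -∑ i, pd i (k i α) y)
    (hcell2 : ∀ (α₁ α₂ : Fin n) (y : Fin n → ℝ),
      ∑ i, pd i (fun y' => ∑ j, k i j y' * pd j (M2 α₁ α₂) y') y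
        = khat α₁ α₂ - k α₁ α₂ y
          - ∑ i, pd i (fun y' => k i α₂ y' * M α₁ y') y
          - ∑ j, k α₁ j y * pd j (M α₂) y)
    {ε : ℝ} {x : Fin n → ℝ} (hε : ε ≠ 0) (hx : x ∈ Ω) :
    ∑ i, pd i (fun x' => ∑ j, k i j (ε⁻¹ • x') * pd j (sotsApprox M M2 T0 ε) x') x
      = ∑ a, ∑ b, khat a b * pd a (pd b T0) x
        + ε * twoScaleRemainder (cellFlux₂ k M M2) (cellFlux₃ k M2) T0 ε x := by
  have hT0' : ∀ x ∈ Ω, ContDiffAt ℝ 4 T0 x := fun x hx => hT0.contDiffAt (hΩ.mem_nhds hx)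
  have hflux i : (fun x' => ∑ j, k i j (ε⁻¹ • x') * pd j (sotsApprox M M2 T0 ε) x')
      =ᶠ[𝓝 x] twoScaleFlux (cellFlux₁ k M) (cellFlux₂ k M M2) (cellFlux₃ k M2) T0 ε i := by
    filter_upwards [hΩ.mem_nhds hx] with x' hx'
    exact sum_mul_pd_sotsApprox hε (fun α => hM α _) (fun a b => hM2 a b _)
      ((hT0' x' hx').of_le (by norm_num)) i
  rw [sum_congr rfl fun i _ => (hflux i).pd_eq]
  exact sum_pd_twoScaleFlux khat hε (hT0' x hx)
    (fun i α => differentiable_cellFlux₁ hk hdM i α _)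
    (fun i p => differentiable_cellFlux₂ hk hM hdM2 i p _)
    (fun i q => (hk i q.1).mul (hM2 _ _) _)
    (fun α => sum_pd_cellFlux₁ hk hdM (hcell α _))
    (fun p => sum_pd_cellFlux₂ hk hM hdM2 (hcell2 p.1 p.2 _))

theorem sots_pointwise_consistency_general (n : ℕ)
    (Ω : Set (Fin n → ℝ)) (hΩ : IsOpen Ω)
    (k : Fin n → Fin n → (Fin n → ℝ) → ℝ)
    (hk : ∀ i j, ContDiff ℝ 1 (k i j))
    (hkper : ∀ i j (y : Fin n → ℝ) (z : Fin n → ℤ),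
      k i j (y + fun t => (z t : ℝ)) = k i j y)
    (khat : Fin n → Fin n → ℝ)
    (h : (Fin n → ℝ) → ℝ)
    (T0 : (Fin n → ℝ) → ℝ) (hT0 : ContDiffOn ℝ 4 T0 Ω)
    (hT0eq : ∀ x ∈ Ω, -∑ i, ∑ j, khat i j * pd i (pd j T0) x = h x)
    (M : Fin n → (Fin n → ℝ) → ℝ)
    (hM : ∀ α, ContDiff ℝ 2 (M α))
    (hMper : ∀ α (y : Fin n → ℝ) (z : Fin n → ℤ),
      M α (y + fun t => (z t : ℝ)) = M α y)
    (hcell : ∀ (α : Fin n) (y : Fin n → ℝ),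
      ∑ i, pd i (fun y' => ∑ j, k i j y' * pd j (M α) y') y
        = -∑ i, pd i (k i α) y)
    (M2 : Fin n → Fin n → (Fin n → ℝ) → ℝ)
    (hM2 : ∀ α₁ α₂, ContDiff ℝ 2 (M2 α₁ α₂))
    (hM2per : ∀ α₁ α₂ (y : Fin n → ℝ) (z : Fin n → ℤ),
      M2 α₁ α₂ (y + fun t => (z t : ℝ)) = M2 α₁ α₂ y)
    (hcell2 : ∀ (α₁ α₂ : Fin n) (y : Fin n → ℝ),
      ∑ i, pd i (fun y' => ∑ j, k i j y' * pd j (M2 α₁ α₂) y') y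
        = khat α₁ α₂ - k α₁ α₂ y
          - ∑ i, pd i (fun y' => k i α₂ y' * M α₁ y') y
          - ∑ j, k α₁ j y * pd j (M α₂) y) :
    ∀ K : Set (Fin n → ℝ), IsCompact K → K ⊆ Ω →
      ∃ C : ℝ, 0 < C ∧ ∀ ε ∈ Set.Ioc (0:ℝ) 1, ∀ x ∈ K,
        |(-∑ i, pd i (fun x' => ∑ j, k i j (ε⁻¹ • x') *
            pd j (fun x'' => T0 x''
              + ε * ∑ α, M α (ε⁻¹ • x'') * pd α T0 x''
              + ε ^ 2 * ∑ α₁, ∑ α₂,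
                  M2 α₁ α₂ (ε⁻¹ • x'') * pd α₁ (pd α₂ T0) x'') x') x)
          - h x| ≤ C * ε := by
  intro K hK hKΩ
  have hkd i j : Differentiable ℝ (k i j) := (hk i j).differentiable one_ne_zero
  have hMd α : Differentiable ℝ (M α) := (hM α).differentiable two_ne_zero
  have hM2d a b : Differentiable ℝ (M2 a b) := (hM2 a b).differentiable two_ne_zero
  have hdMd j α : Differentiable ℝ (pd j (M α)) := ((hM α).pd j).differentiable one_ne_zero
  have hdM2d j a b : Differentiable ℝ (pd j (M2 a b)) :=
    ((hM2 a b).pd j).differentiable one_ne_zero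
  obtain ⟨C, hC⟩ := exists_abs_twoScaleRemainder_le hK
    (fun x hx => hT0.contDiffAt (hΩ.mem_nhds (hKΩ hx)))
    (fun i p => (differentiable_cellFlux₂ hkd hMd hdM2d i p).continuous)
    (isIntPeriodic_cellFlux₂ hkper hMper hM2per)
    (contDiff_cellFlux₃ hk fun a b => (hM2 a b).of_le one_le_two)
    (isIntPeriodic_cellFlux₃ hkper hM2per)
  refine ⟨|C| + 1, by positivity, fun ε hε x hx => ?_⟩
  change |-∑ i, pd i (fun x' => ∑ j, k i j (ε⁻¹ • x') * pd j (sotsApprox M M2 T0 ε) x') x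
    - h x| ≤ _
  rw [sots_residual_identity hΩ hkd hMd hdMd hM2d hdM2d hT0 hcell hcell2 hε.1.ne' (hKΩ hx),
    ← hT0eq x (hKΩ hx)]
  have hR := hC ε (by rw [abs_of_pos hε.1]; exact hε.2) x hx
  calc _ = |-(ε * twoScaleRemainder (cellFlux₂ k M M2) (cellFlux₃ k M2) T0 ε x)| := by
        congr 1
        ring
    _ = ε * |twoScaleRemainder (cellFlux₂ k M M2) (cellFlux₃ k M2) T0 ε x| := by
        rw [abs_neg, abs_mul, abs_of_pos hε.1]
    _ ≤ (|C| + 1) * ε := by nlinarith [le_abs_self C, hε.1]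

/-- **Quantitative pointwise consistency of the SOTS approximation.**  Under the SOTS
hypotheses (periodic C¹ coefficients, periodic cell functions solving the first- and
second-order cell equations, homogenized solution `T⁰`), applying the heterogeneous
operator `−∂_i(k_{ij}(x/ε)∂_j ·)` to
`T^{(2ε)}(x) = T⁰(x) + ε M_α(x/ε)∂_α T⁰(x) + ε² M_{α₁α₂}(x/ε)∂²_{α₁α₂}T⁰(x)`
reproduces `h` up to `O(ε)`, uniformly on compact subsets of `Ω`. -/
theorem sots_pointwise_consistency (n : ℕ) (hn : 1 ≤ n)
    (Ω : Set (Fin n → ℝ)) (hΩ : IsOpen Ω)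
    (k : Fin n → Fin n → (Fin n → ℝ) → ℝ)
    (hk : ∀ i j, ContDiff ℝ 1 (k i j))
    (hkper : ∀ i j (y : Fin n → ℝ) (z : Fin n → ℤ),
      k i j (y + fun t => (z t : ℝ)) = k i j y)
    (khat : Fin n → Fin n → ℝ)
    (h : (Fin n → ℝ) → ℝ)
    (T0 : (Fin n → ℝ) → ℝ) (hT0 : ContDiffOn ℝ 4 T0 Ω)
    (hT0eq : ∀ x ∈ Ω, -∑ i, ∑ j, khat i j * pd i (pd j T0) x = h x)
    (M : Fin n → (Fin n → ℝ) → ℝ)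
    (hM : ∀ α, ContDiff ℝ 2 (M α))
    (hMper : ∀ α (y : Fin n → ℝ) (z : Fin n → ℤ),
      M α (y + fun t => (z t : ℝ)) = M α y)
    (hcell : ∀ (α : Fin n) (y : Fin n → ℝ),
      ∑ i, pd i (fun y' => ∑ j, k i j y' * pd j (M α) y') y
        = -∑ i, pd i (k i α) y)
    (M2 : Fin n → Fin n → (Fin n → ℝ) → ℝ)
    (hM2 : ∀ α₁ α₂, ContDiff ℝ 2 (M2 α₁ α₂))
    (hM2per : ∀ α₁ α₂ (y : Fin n → ℝ) (z : Fin n → ℤ),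
      M2 α₁ α₂ (y + fun t => (z t : ℝ)) = M2 α₁ α₂ y)
    (hcell2 : ∀ (α₁ α₂ : Fin n) (y : Fin n → ℝ),
      ∑ i, pd i (fun y' => ∑ j, k i j y' * pd j (M2 α₁ α₂) y') y
        = khat α₁ α₂ - k α₁ α₂ y
          - ∑ i, pd i (fun y' => k i α₂ y' * M α₁ y') y
          - ∑ j, k α₁ j y * pd j (M α₂) y) :
    ∀ K : Set (Fin n → ℝ), IsCompact K → K ⊆ Ω →
      ∃ C : ℝ, 0 < C ∧ ∀ ε ∈ Set.Ioc (0:ℝ) 1, ∀ x ∈ K,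
        |(-∑ i, pd i (fun x' => ∑ j, k i j (ε⁻¹ • x') *
            pd j (fun x'' => T0 x''
              + ε * ∑ α, M α (ε⁻¹ • x'') * pd α T0 x''
              + ε ^ 2 * ∑ α₁, ∑ α₂,
                  M2 α₁ α₂ (ε⁻¹ • x'') * pd α₁ (pd α₂ T0) x'') x') x)
          - h x| ≤ C * ε :=
  sots_pointwise_consistency_general n Ω hΩ k hk hkper khat h T0 hT0 hT0eq M hM hMper hcell M2 hM2
    hM2per hcell2
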